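/- Let a ∈ (-1,0) ∪ (0,1] and let M = (M₁,M₂,M₃) : ℝ → ℝ³ be a differentiable solution of the system Ṁ₁ = M₂M₃ + (3/(1+a))·sign(a)·M₂, Ṁ₂ = -M₁M₃ - (3(1+a)/(4|a|))·M₁, Ṁ₃ = (1/(4a²) - 1/(a(1+a)²))·M₁M₂. Then the functions t ↦ (M₁(t)² + M₂(t)²)/(2|a|(1+a)) + 3M₃(t) and t ↦ M₁(t)²/(4a²) + M₂(t)²/(a(1+a)²) - M₃(t)² are constant. -/

import Mathlib

/-!
Both quantities are first integrals of the Lie–Poisson flow: the derivative of each along a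
solution is its gradient paired with the vector field, and this pairing vanishes identically in
`(M₁, M₂, M₃)`. The parameter enters the vector field through `sign a` and `|a|` only in the
combinations `sign a / |a| = 1 / a` and `|a| ^ 2 = a ^ 2`, after which the vanishing is an
identity of rational functions of `a`.
-/

open Real

theorem Real.sign_eq_div_abs (a : ℝ) : Real.sign a = a / |a| := by
  rcases lt_trichotomy a 0 with h | rfl | h
  · rw [sign_of_neg h, abs_of_neg h, div_neg, div_self h.ne]
  · simp [sign_zero]
  · rw [sign_of_pos h, abs_of_pos h, div_self h.ne']

theorem eq_of_forall_hasDerivAt_zero {𝕜 G : Type*} [RCLike 𝕜] [NormedAddCommGroup G]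
    [NormedSpace 𝕜 G] {f : 𝕜 → G} (hf : ∀ x, HasDerivAt f 0 x) (x y : 𝕜) : f x = f y :=
  is_const_of_deriv_eq_zero (fun x => (hf x).differentiableAt) (fun x => (hf x).deriv) x y

section LiePoisson

variable {a : ℝ} (h0 : a ≠ 0) (h1 : 1 + a ≠ 0) {M₁ M₂ M₃ : ℝ → ℝ} {t : ℝ}
  (h₁ : HasDerivAt M₁ (M₂ t * M₃ t + (3 / (1 + a)) * Real.sign a * M₂ t) t)
  (h₂ : HasDerivAt M₂ (-(M₁ t * M₃ t) - (3 * (1 + a) / (4 * |a|)) * M₁ t) t)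
  (h₃ : HasDerivAt M₃ ((1 / (4 * a ^ 2) - 1 / (a * (1 + a) ^ 2)) * M₁ t * M₂ t) t)
include h0 h1 h₁ h₂ h₃

theorem liePoisson_hamiltonian_hasDerivAt_zero :
    HasDerivAt (fun t => (M₁ t ^ 2 + M₂ t ^ 2) / (2 * |a| * (1 + a)) + 3 * M₃ t) 0 t := by
  refine ((((h₁.pow 2).add (h₂.pow 2)).div_const _).add (h₃.const_mul 3)).congr_deriv ?_
  have : |a| ≠ 0 := abs_ne_zero.mpr h0
  rw [Real.sign_eq_div_abs]
  field_simp
  rw [sq_abs]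
  ring

theorem liePoisson_casimir_hasDerivAt_zero :
    HasDerivAt (fun t => M₁ t ^ 2 / (4 * a ^ 2) + M₂ t ^ 2 / (a * (1 + a) ^ 2) - M₃ t ^ 2)
      0 t := by
  refine ((((h₁.pow 2).div_const _).add ((h₂.pow 2).div_const _)).sub (h₃.pow 2)).congr_deriv ?_
  have : |a| ≠ 0 := abs_ne_zero.mpr h0
  rw [Real.sign_eq_div_abs]
  field_simp
  ring

end LiePoisson

/-- Case (F), `SL(2,ℝ)` with parameter `a ∈ (-1,0) ∪ (0,1]`: the Lie–Poisson
system has the two conserved quantities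
`(M₁² + M₂²)/(2|a|(1+a)) + 3M₃` (twice the Hamiltonian, up to a constant) and
`M₁²/(4a²) + M₂²/(a(1+a)²) - M₃²` (the Casimir function). -/
theorem stmt_8 (a : ℝ) (ha : a ∈ Set.Ioo (-1 : ℝ) 0 ∪ Set.Ioc (0 : ℝ) 1)
    (M₁ M₂ M₃ : ℝ → ℝ)
    (h₁ : ∀ t, HasDerivAt M₁
      (M₂ t * M₃ t + (3 / (1 + a)) * Real.sign a * M₂ t) t)
    (h₂ : ∀ t, HasDerivAt M₂
      (-(M₁ t * M₃ t) - (3 * (1 + a) / (4 * |a|)) * M₁ t) t)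
    (h₃ : ∀ t, HasDerivAt M₃
      ((1 / (4 * a ^ 2) - 1 / (a * (1 + a) ^ 2)) * M₁ t * M₂ t) t) :
    (∀ t : ℝ,
      (M₁ t ^ 2 + M₂ t ^ 2) / (2 * |a| * (1 + a)) + 3 * M₃ t
        = (M₁ 0 ^ 2 + M₂ 0 ^ 2) / (2 * |a| * (1 + a)) + 3 * M₃ 0) ∧
    (∀ t : ℝ,
      M₁ t ^ 2 / (4 * a ^ 2) + M₂ t ^ 2 / (a * (1 + a) ^ 2) - M₃ t ^ 2
        = M₁ 0 ^ 2 / (4 * a ^ 2) + M₂ 0 ^ 2 / (a * (1 + a) ^ 2) - M₃ 0 ^ 2) := by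
  obtain ⟨h0, h1⟩ : a ≠ 0 ∧ 1 + a ≠ 0 := by
    rcases ha with ⟨hlo, hhi⟩ | ⟨hlo, hhi⟩ <;> constructor <;> linarith
  exact ⟨fun t => eq_of_forall_hasDerivAt_zero
      (fun t => liePoisson_hamiltonian_hasDerivAt_zero h0 h1 (h₁ t) (h₂ t) (h₃ t)) t 0,
    fun t => eq_of_forall_hasDerivAt_zero
      (fun t => liePoisson_casimir_hasDerivAt_zero h0 h1 (h₁ t) (h₂ t) (h₃ t)) t 0⟩
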